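/- Every N-rectangle is a proper cover of 𝒯: if X = {X₁,...,X_N} is an N-rectangle then 𝒯 = X₁ ∪ ⋯ ∪ X_N, but no proper subfamily of X covers 𝒯. -/
import Mathlib


noncomputable section

/-- 𝒯 = ∏_{n∈ℕ} [2^n]  (the paper's index `n ∈ {1,2,…}` is the Lean index `n+1`). -/
abbrev Tal : Type := (n : ℕ) → Fin (2 ^ (n + 1))

/-- `S_{n,τ} = {f ∈ 𝒯 : f(n) ≠ τ}`. -/
def Sset (n : ℕ) (τ : Fin (2 ^ (n + 1))) : Set Tal := {f | f n ≠ τ}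

/-- The 𝒟-set `⋂_{n ∈ I} S_{n, t n}` with (nonempty, finite) index set `I`;
only the values of `t` on `I` matter. -/
def DSet (I : Finset ℕ) (t : (n : ℕ) → Fin (2 ^ (n + 1))) : Set Tal :=
  {f | ∀ n ∈ I, f n ≠ t n}

/-- `η(k) = 2^{2500 k⁴}`. -/
def ηT (k : ℕ) : ℕ := 2 ^ (2500 * k ^ 4)

/-- `α(k) = (k+5)^{-3}`. -/
def αT (k : ℕ) : ℝ := (((k : ℝ) + 5) ^ 3)⁻¹

/-- `δ(m) = min {n ∈ ℕ : η(n) ≥ m}` (with `ℕ = {1,2,…}`). -/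
def δT (m : ℕ) : ℕ := sInf {n : ℕ | 1 ≤ n ∧ m ≤ ηT n}

/-- `w(n) = 2^{-δ(n)} (η(δ(n))/n)^{α(δ(n))}`. -/
def wT (n : ℕ) : ℝ :=
  (2 : ℝ) ^ (-(δT n : ℤ)) * ((ηT (δT n) : ℝ) / (n : ℝ)) ^ (αT (δT n))

/-- Membership in Talagrand's family 𝒟 for a triple `(X, I, w)`:  for some `k ∈ {1,2,…}`,
`X` is a 𝒟-set with index set `I`, `1 ≤ |I| ≤ η(k)`, and `w = 2^{-k}(η(k)/|I|)^{α(k)}`. -/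
def memD (p : Set Tal × Finset ℕ × ℝ) : Prop :=
  ∃ k : ℕ, 1 ≤ k ∧ (∃ t : (n : ℕ) → Fin (2 ^ (n + 1)), p.1 = DSet p.2.1 t) ∧
    p.2.1.Nonempty ∧ p.2.1.card ≤ ηT k ∧
    p.2.2 = (2 : ℝ) ^ (-(k : ℤ)) * ((ηT k : ℝ) / (p.2.1.card : ℝ)) ^ (αT k)

/-- Talagrand's first pathological submeasure:
`ψ(B) = inf { w(Y) : Y ⊆ 𝒟 finite, B ⊆ ⋃ Y }`. -/
def ψT (B : Set Tal) : ℝ :=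
  sInf {r : ℝ | ∃ Y : Finset (Set Tal × Finset ℕ × ℝ), (∀ p ∈ Y, memD p) ∧
    B ⊆ (⋃ p ∈ Y, p.1) ∧ r = ∑ p ∈ Y, p.2.2}

end

/-- Every `N`-rectangle (a family of `N` distinct 𝒟-sets with a common
index set `J` of cardinality `N − 1`, whose defining values pairwise differ everywhere
on `J`) is a proper cover of 𝒯. -/
theorem statement7 (N : ℕ) (hN : 2 ≤ N)
    (J : Finset ℕ) (hJcard : J.card = N - 1)
    (t : Fin N → (n : ℕ) → Fin (2 ^ (n + 1)))
    (hdiff : ∀ i j : Fin N, i ≠ j → ∀ m ∈ J, t i m ≠ t j m)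
    (hdistinct : Function.Injective (fun i : Fin N => DSet J (t i))) :
    (⋃ i : Fin N, DSet J (t i)) = Set.univ ∧
      ∀ s : Finset (Fin N), s ≠ Finset.univ →
        ¬ (Set.univ ⊆ ⋃ i ∈ s, DSet J (t i)) := by
  constructor
  · rw [Set.eq_univ_iff_forall]
    intro f
    by_contra hf
    simp only [Set.mem_iUnion, not_exists] at hf
    have hg : ∀ i : Fin N, ∃ m ∈ J, f m = t i m := by
      intro i
      have h := hf i
      simp only [DSet, Set.mem_setOf_eq, not_forall] at h
      obtain ⟨m, hm, h⟩ := h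
      exact ⟨m, hm, not_not.mp h⟩
    choose g hgJ hgf using hg
    have hnotinj : ¬ Function.Injective (fun i : Fin N => (⟨g i, hgJ i⟩ : ↥J)) := by
      intro hinj
      have := Fintype.card_le_of_injective _ hinj
      simp only [Fintype.card_coe, Fintype.card_fin, hJcard] at this
      omega
    obtain ⟨i, j, hij, hne⟩ := Function.not_injective_iff.mp hnotinj
    have hgij : g i = g j := congrArg Subtype.val hij
    exact hdiff i j hne (g i) (hgJ i) (by rw [← hgf i, hgij, hgf j])
  · intro s hs hsub
    have hcard : s.card < N := by
      have := Finset.card_lt_card (Finset.ssubset_univ_iff.mpr hs)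
      simpa using this
    obtain ⟨e⟩ : Nonempty (↥s ↪ ↥J) := by
      apply Function.Embedding.nonempty_of_card_le
      simp only [Fintype.card_coe, Fintype.card_fin, hJcard]
      omega
    let i0 : Fin N := ⟨0, by omega⟩
    let f : Tal := fun m =>
      t (if h : ∃ j : ↥s, ((e j : ℕ)) = m then ((h.choose : ↥s) : Fin N) else i0) m
    have hfmem := hsub (Set.mem_univ f)
    simp only [Set.mem_iUnion] at hfmem
    obtain ⟨j, hj, hjf⟩ := hfmem
    set j' : ↥s := ⟨j, hj⟩
    have hex : ∃ j'' : ↥s, ((e j'' : ℕ)) = ((e j' : ℕ)) := ⟨j', rfl⟩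
    have hch : hex.choose = j' := e.injective (Subtype.ext hex.choose_spec)
    have hfval : f ((e j' : ℕ)) = t j ((e j' : ℕ)) := by
      show t (if h : ∃ j'' : ↥s, ((e j'' : ℕ)) = ((e j' : ℕ))
        then ((h.choose : ↥s) : Fin N) else i0) _ = _
      rw [dif_pos hex, hch]
    exact hjf ((e j' : ℕ)) (e j').2 hfval
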